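/- arXiv:math/0402146 — 4 statements merged into one kernel-verified Lean document; each statement's English description precedes it below -/
import Mathlib

section
/- Let M be a lattice of rank n and σ∨ ⊂ M ⊗ ℝ a full-dimensional strictly convex rational polyhedral cone whose primitive ray generators u₁,…,u_n are linearly independent (simplicial case) but do not form part of a basis normalization making the cone regular, i.e., {u₁,…,u_n} is not a ℤ-basis of M. Then there exists a lattice point p in the interior of σ∨ with λ_max(p) ≤ n − 1. -/
/-!
Write a lattice point `x` that is not an integral combination of the `uᵢ` as `x = ∑ aᵢ uᵢ`; the
fractional parts `fᵢ` of the `aᵢ` give a nonzero lattice point `q = ∑ fᵢ uᵢ` of the half-open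
parallelepiped, and primitivity of the `uᵢ` forces at least two `fᵢ` to be nonzero. The lattice
points `p = ∑ uᵢ - q` and `p' = q + ∑_{fᵢ = 0} uᵢ` have all coefficients positive, and their
coefficient sums add up to `2n - #{i | fᵢ ≠ 0} ≤ 2n - 2`, so one of them has `λ_max ≤ n - 1`.
-/

open Finset

noncomputable section

/-- The convex polyhedral cone generated by the vectors `u i`. -/
def coneOf {n : ℕ} {ι : Type*} [Fintype ι] (u : ι → (Fin n → ℝ)) : Set (Fin n → ℝ) :=
  {x | ∃ a : ι → ℝ, (∀ i, 0 ≤ a i) ∧ x = ∑ i, a i • u i}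

/-- The set of coefficient sums of nonnegative representations of `x` in terms of `u`. -/
def reprSums {n : ℕ} {ι : Type*} [Fintype ι] (u : ι → (Fin n → ℝ)) (x : Fin n → ℝ) :
    Set ℝ :=
  {t | ∃ a : ι → ℝ, (∀ i, 0 ≤ a i) ∧ x = ∑ i, a i • u i ∧ t = ∑ i, a i}

/-- `λ_min`: the minimal coefficient sum of a nonnegative representation. -/
noncomputable def lamMin {n : ℕ} {ι : Type*} [Fintype ι] (u : ι → (Fin n → ℝ))
    (x : Fin n → ℝ) : ℝ :=
  sInf (reprSums u x)

/-- `λ_max`: the maximal coefficient sum of a nonnegative representation. -/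
noncomputable def lamMax {n : ℕ} {ι : Type*} [Fintype ι] (u : ι → (Fin n → ℝ))
    (x : Fin n → ℝ) : ℝ :=
  sSup (reprSums u x)

/-- A lattice point: all coordinates are integers. -/
def IsLatticePt {n : ℕ} (x : Fin n → ℝ) : Prop := ∀ j, ∃ z : ℤ, x j = (z : ℝ)

/-- A primitive lattice vector: the smallest nonzero lattice point on its ray. -/
def IsPrimitive {n : ℕ} (x : Fin n → ℝ) : Prop :=
  IsLatticePt x ∧ x ≠ 0 ∧ ∀ c : ℝ, 0 < c → IsLatticePt (c • x) → 1 ≤ c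

/-- Strict convexity (pointedness) of the cone generated by `u`. -/
def PointedGens {n : ℕ} {ι : Type*} [Fintype ι] (u : ι → (Fin n → ℝ)) : Prop :=
  ∀ x, x ∈ coneOf u → -x ∈ coneOf u → x = 0

/-- Full-dimensionality of the cone generated by `u`. -/
def FullDim {n : ℕ} {ι : Type*} [Fintype ι] (u : ι → (Fin n → ℝ)) : Prop :=
  Submodule.span ℝ (Set.range u) = ⊤

/-- Each `u i` spans an extremal ray: it is not in the cone generated by the others. -/
def ExtremalGens {n : ℕ} {ι : Type*} [Fintype ι] [DecidableEq ι]
    (u : ι → (Fin n → ℝ)) : Prop :=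
  ∀ i, u i ∉ coneOf (fun j : {j : ι // j ≠ i} => u j.1)

/-- The standard pairing between `M ⊗ ℝ` and `N ⊗ ℝ`. -/
def pairing {n : ℕ} (x v : Fin n → ℝ) : ℝ := ∑ j, x j * v j

section Lattice

variable {n : ℕ} {x y : Fin n → ℝ}

lemma IsLatticePt.add (hx : IsLatticePt x) (hy : IsLatticePt y) : IsLatticePt (x + y) := by
  intro j
  obtain ⟨a, ha⟩ := hx j
  obtain ⟨b, hb⟩ := hy j
  exact ⟨a + b, by simp [ha, hb]⟩

lemma IsLatticePt.sub (hx : IsLatticePt x) (hy : IsLatticePt y) : IsLatticePt (x - y) := by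
  intro j
  obtain ⟨a, ha⟩ := hx j
  obtain ⟨b, hb⟩ := hy j
  exact ⟨a - b, by simp [ha, hb]⟩

lemma isLatticePt_sum_intCast_smul {ι : Type*} [Fintype ι] (z : ι → ℤ) {v : ι → Fin n → ℝ}
    (hv : ∀ i, IsLatticePt (v i)) : IsLatticePt (∑ i, (z i : ℝ) • v i) := by
  intro j
  choose w hw using fun i => hv i j
  exact ⟨∑ i, z i * w i, by simp [Finset.sum_apply, hw]⟩

end Lattice

section SimplicialCone

variable {n : ℕ} {ι : Type*} [Fintype ι] {u : ι → Fin n → ℝ}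

lemma lamMax_sum_smul (hli : LinearIndependent ℝ u) {a : ι → ℝ} (ha : ∀ i, 0 ≤ a i) :
    lamMax u (∑ i, a i • u i) = ∑ i, a i := by
  have hsums : reprSums u (∑ i, a i • u i) = {∑ i, a i} := by
    ext t
    constructor
    · rintro ⟨b, -, hab, rfl⟩
      simp [funext (Fintype.linearIndependent_iffₛ.mp hli a b hab)]
    · rintro rfl
      exact ⟨a, ha, rfl, rfl⟩
  rw [lamMax, hsums, csSup_singleton]

lemma sum_smul_mem_interior_coneOf (hli : LinearIndependent ℝ u) (hfd : FullDim u)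
    {a : ι → ℝ} (ha : ∀ i, 0 < a i) : ∑ i, a i • u i ∈ interior (coneOf u) := by
  let b := Module.Basis.mk hli hfd.ge
  have hb : ∀ c : ι → ℝ, b.equivFunL (∑ i, c i • u i) = c := fun c => by
    have hc : ∑ i, c i • u i = b.equivFun.symm c := by simp [b, Module.Basis.equivFun_symm_apply]
    rw [hc]; exact b.equivFun.apply_symm_apply c
  have hopen : IsOpen (b.equivFunL ⁻¹' Set.univ.pi fun _ => Set.Ioi 0) :=
    (isOpen_set_pi Set.finite_univ fun _ _ => isOpen_Ioi).preimage b.equivFunL.continuous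
  refine interior_maximal (fun x hx => ?_) hopen (by simpa [hb] using ha)
  refine ⟨b.equivFunL x, fun i => le_of_lt (by simpa using hx i (Set.mem_univ i)), ?_⟩
  simpa [b] using (b.sum_equivFun x).symm

lemma exists_fract_coeffs (hfd : FullDim u) (hu : ∀ i, IsLatticePt (u i)) {x : Fin n → ℝ}
    (hx : IsLatticePt x) (hxz : ∀ z : ι → ℤ, x ≠ ∑ i, (z i : ℝ) • u i) :
    ∃ f : ι → ℝ, (∀ i, 0 ≤ f i ∧ f i < 1) ∧ f ≠ 0 ∧ IsLatticePt (∑ i, f i • u i) := by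
  obtain ⟨a, rfl⟩ :=
    (Submodule.mem_span_range_iff_exists_fun ℝ).mp (hfd ▸ Submodule.mem_top : x ∈ _)
  refine ⟨fun i => Int.fract (a i), fun i => ⟨Int.fract_nonneg _, Int.fract_lt_one _⟩, ?_, ?_⟩
  · intro hfract
    refine hxz (fun i => ⌊a i⌋) (Finset.sum_congr rfl fun i _ => ?_)
    rw [← Int.floor_add_fract (a i), congrFun hfract i]
    simp
  · have hq : ∑ i, Int.fract (a i) • u i = ∑ i, a i • u i - ∑ i, (⌊a i⌋ : ℝ) • u i := by
      simp only [Int.fract, sub_smul, Finset.sum_sub_distrib]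
    rw [hq]
    exact hx.sub (isLatticePt_sum_intCast_smul _ hu)

lemma one_lt_card_support_of_isPrimitive (hprim : ∀ i, IsPrimitive (u i)) {f : ι → ℝ}
    (hf : ∀ i, 0 ≤ f i ∧ f i < 1) (hne : f ≠ 0) (hq : IsLatticePt (∑ i, f i • u i)) :
    1 < #{i | f i ≠ 0} := by
  obtain ⟨i, hi⟩ := Function.ne_iff.mp hne
  by_contra! hle
  have hzero : ∀ j ≠ i, f j = 0 := fun j hj => by
    by_contra hfj
    exact hj (Finset.card_le_one.mp hle j (by simpa using hfj) i (by simpa using hi))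
  have hsingle : ∑ j, f j • u j = f i • u i :=
    Finset.sum_eq_single i (fun j _ hj => by simp [hzero j hj]) (by simp)
  have := (hprim i).2.2 (f i) ((hf i).1.lt_of_ne' hi) (hsingle ▸ hq)
  linarith [(hf i).2]

lemma exists_interior_lattice_pair (hli : LinearIndependent ℝ u) (hfd : FullDim u)
    (hu : ∀ i, IsLatticePt (u i)) {f : ι → ℝ} (hf : ∀ i, 0 ≤ f i ∧ f i < 1)
    (hq : IsLatticePt (∑ i, f i • u i)) :
    ∃ p p', IsLatticePt p ∧ p ∈ interior (coneOf u) ∧ IsLatticePt p' ∧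
      p' ∈ interior (coneOf u) ∧
      lamMax u p + lamMax u p' = 2 * Fintype.card ι - #{i | f i ≠ 0} := by
  let g : ι → ℝ := fun i => 1 - f i
  let g' : ι → ℝ := fun i => f i + if f i = 0 then 1 else 0
  have hg : ∀ i, 0 < g i := fun i => sub_pos.2 (hf i).2
  have hg' : ∀ i, 0 < g' i := fun i => by
    by_cases h : f i = 0
    · simp [g', h]
    · simpa [g', h] using (hf i).1.lt_of_ne' h
  refine ⟨∑ i, g i • u i, ∑ i, g' i • u i, ?_, sum_smul_mem_interior_coneOf hli hfd hg, ?_,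
    sum_smul_mem_interior_coneOf hli hfd hg', ?_⟩
  · have hp : ∑ i, g i • u i = ∑ i, ((1 : ℤ) : ℝ) • u i - ∑ i, f i • u i := by
      simp [g, sub_smul]
    rw [hp]
    exact (isLatticePt_sum_intCast_smul 1 hu).sub hq
  · have hp' : ∑ i, g' i • u i =
        ∑ i, f i • u i + ∑ i, ((if f i = 0 then 1 else 0 : ℤ) : ℝ) • u i := by
      simp [g', add_smul, Finset.sum_add_distrib]
    rw [hp']
    exact hq.add (isLatticePt_sum_intCast_smul _ hu)
  · rw [lamMax_sum_smul hli fun i => (hg i).le, lamMax_sum_smul hli fun i => (hg' i).le]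
    have hcard : (#{i | f i = 0} : ℝ) + #{i | f i ≠ 0} = Fintype.card ι := by
      exact_mod_cast Finset.card_filter_add_card_filter_not (s := univ) (fun i => f i = 0)
    simp only [g, g', Finset.sum_sub_distrib, Finset.sum_add_distrib, Finset.sum_boole,
      Finset.sum_const, Finset.card_univ, nsmul_eq_mul, mul_one]
    linarith

end SimplicialCone

theorem exists_interior_lattice_lamMax_le_general {n : ℕ} (u : Fin n → (Fin n → ℝ))
    (hli : LinearIndependent ℝ u) (hprim : ∀ i, IsPrimitive (u i))
    (hfd : FullDim u)
    (hnb : ¬ ∀ x : Fin n → ℝ, IsLatticePt x → ∃ z : Fin n → ℤ,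
      x = ∑ i, (z i : ℝ) • u i) :
    ∃ p : Fin n → ℝ, IsLatticePt p ∧ p ∈ interior (coneOf u) ∧
      lamMax u p ≤ (n : ℝ) - 1 := by
  push Not at hnb
  obtain ⟨x, hx, hxz⟩ := hnb
  have hu i : IsLatticePt (u i) := (hprim i).1
  obtain ⟨f, hf, hne, hq⟩ := exists_fract_coeffs hfd hu hx hxz
  obtain ⟨p, p', hp, hpi, hp', hpi', hsum⟩ := exists_interior_lattice_pair hli hfd hu hf hq
  have hsupp : (2 : ℝ) ≤ #{i | f i ≠ 0} := by
    exact_mod_cast one_lt_card_support_of_isPrimitive hprim hf hne hq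
  rw [Fintype.card_fin] at hsum
  rcases le_total (lamMax u p) (lamMax u p') with h | h
  · exact ⟨p, hp, hpi, by linarith⟩
  · exact ⟨p', hp', hpi', by linarith⟩

/-- a simplicial cone whose linearly independent primitive ray generators
are not a ℤ-basis of the lattice has an interior lattice point p with λ_max(p) ≤ n − 1. -/
theorem exists_interior_lattice_lamMax_le {n : ℕ} (u : Fin n → (Fin n → ℝ))
    (hli : LinearIndependent ℝ u) (hprim : ∀ i, IsPrimitive (u i))
    (hpt : PointedGens u) (hfd : FullDim u)
    (hnb : ¬ ∀ x : Fin n → ℝ, IsLatticePt x → ∃ z : Fin n → ℤ,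
      x = ∑ i, (z i : ℝ) • u i) :
    ∃ p : Fin n → ℝ, IsLatticePt p ∧ p ∈ interior (coneOf u) ∧
      lamMax u p ≤ (n : ℝ) - 1 :=
  exists_interior_lattice_lamMax_le_general u hli hprim hfd hnb
end
end

section
/- Let σ∨ ⊂ M ⊗ ℝ be a full-dimensional strictly convex rational polyhedral cone of dimension n that is not simplicial, with primitive ray generators u₁,…,u_s. Let γ ⊆ σ∨ be a cone spanned by n linearly independent primitive generators u₁,…,u_n on which λ_max is linear. Then some facet of γ, say the one spanned by u₁,…,u_{n−1}, has relative interior contained in the topological interior of σ∨, and p = u₁ + ⋯ + u_{n−1} is a lattice point in the interior of σ∨ with λ_max(p) = n − 1. -/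
open Finset

noncomputable section

/-!
Pick `x ∈ σ∨ \ γ`. In the basis `u (f 0), …, u (f (n-1))` of `γ` some coordinate `x_j` is
negative, so `q = x + |x_j| • ∑ i, u (f i)` lies in the interior of `σ∨` (an interior point
of `γ` plus a point of `σ∨`) and has vanishing `j`-th coordinate. A positive combination of
the generators `u (f i)`, `i ≠ j`, is `ε • q` plus a point of `γ` for small `ε > 0`, hence
interior. Pointedness and extremality give `λ_max (u k) = 1` for every generator, so the
linearity of `λ_max` on `γ` yields `λ_max = n - 1` at the sum of the facet's generators.
-/

section Cone

variable {n : ℕ} {ι : Type*} [Fintype ι] {u : ι → (Fin n → ℝ)}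

theorem sum_smul_mem_coneOf {s : Finset ι} {a : ι → ℝ} (ha : ∀ i ∈ s, 0 ≤ a i) :
    ∑ i ∈ s, a i • u i ∈ coneOf u := by
  classical
  refine ⟨fun i => if i ∈ s then a i else 0, fun i => ?_, by simp [ite_smul, sum_ite_mem]⟩
  by_cases hi : i ∈ s <;> simp [hi, ha]

theorem mem_coneOf_self (i : ι) : u i ∈ coneOf u := by
  simpa using sum_smul_mem_coneOf (u := u) (s := {i}) (a := 1) (by simp)

theorem add_mem_coneOf {x y : Fin n → ℝ} (hx : x ∈ coneOf u) (hy : y ∈ coneOf u) :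
    x + y ∈ coneOf u := by
  obtain ⟨a, ha, rfl⟩ := hx
  obtain ⟨b, hb, rfl⟩ := hy
  exact ⟨a + b, fun i => add_nonneg (ha i) (hb i), by simp [add_smul, sum_add_distrib]⟩

theorem smul_mem_coneOf {c : ℝ} {x : Fin n → ℝ} (hc : 0 ≤ c) (hx : x ∈ coneOf u) :
    c • x ∈ coneOf u := by
  obtain ⟨a, ha, rfl⟩ := hx
  exact ⟨c • a, fun i => mul_nonneg hc (ha i), by simp [smul_sum, smul_smul]⟩

theorem add_mem_interior_coneOf {x y : Fin n → ℝ} (hx : x ∈ interior (coneOf u))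
    (hy : y ∈ coneOf u) : x + y ∈ interior (coneOf u) :=
  interior_maximal
    (Set.add_subset_iff.2 fun _ ha _ hb => add_mem_coneOf (interior_subset ha) hb)
    isOpen_interior.add_right (Set.add_mem_add hx hy)

theorem smul_mem_interior_coneOf {c : ℝ} {x : Fin n → ℝ} (hc : 0 < c)
    (hx : x ∈ interior (coneOf u)) : c • x ∈ interior (coneOf u) :=
  interior_maximal
    (Set.smul_set_subset_iff.2 fun _ ha => smul_mem_coneOf hc.le (interior_subset ha))
    (isOpen_interior.smul₀ hc.ne') (Set.smul_mem_smul_set hx)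

end Cone

section Generators

variable {n : ℕ} {ι : Type*} [Fintype ι] [DecidableEq ι] {u : ι → (Fin n → ℝ)}

theorem eq_zero_of_sum_smul_eq_zero (hpt : PointedGens u) (hne : ∀ i, u i ≠ 0)
    {a : ι → ℝ} (ha : ∀ i, 0 ≤ a i) (h0 : ∑ i, a i • u i = 0) : a = 0 := by
  funext k
  have hrest : ∑ i ∈ univ.erase k, a i • u i = -(a k • u k) :=
    eq_neg_of_add_eq_zero_right ((add_sum_erase _ _ (mem_univ k)).trans h0)
  have hk : a k • u k = 0 :=
    hpt _ (smul_mem_coneOf (ha k) (mem_coneOf_self k))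
      (hrest ▸ sum_smul_mem_coneOf fun i _ => ha i)
  exact (smul_eq_zero.1 hk).resolve_right (hne k)

theorem sum_le_one_of_gen_eq_sum_smul (hpt : PointedGens u) (hne : ∀ i, u i ≠ 0)
    (hext : ExtremalGens u) {k : ι} {a : ι → ℝ} (ha : ∀ i, 0 ≤ a i)
    (hk : u k = ∑ i, a i • u i) : ∑ i, a i ≤ 1 := by
  rcases lt_or_ge (a k) 1 with hlt | hge
  · have hrest : (1 - a k) • u k = ∑ i ∈ univ.erase k, a i • u i := by
      rw [sub_smul, one_smul, sub_eq_iff_eq_add',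
        add_sum_erase _ (fun i => a i • u i) (mem_univ k), hk]
    refine absurd ⟨fun i => (1 - a k)⁻¹ * a i, fun i => ?_, ?_⟩ (hext k)
    · exact mul_nonneg (inv_nonneg.2 (sub_nonneg.2 hlt.le)) (ha i)
    · rw [← sum_subtype (univ.erase k) (p := (· ≠ k)) (by simp)
        (fun i => ((1 - a k)⁻¹ * a i) • u i)]
      simp only [mul_smul, ← smul_sum, ← hrest]
      rw [smul_smul, inv_mul_cancel₀ (sub_ne_zero.2 hlt.ne'), one_smul]
  · have hsingle : a - Pi.single k 1 = 0 := by
      refine eq_zero_of_sum_smul_eq_zero hpt hne (fun i => ?_) ?_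
      · by_cases hi : i = k
        · subst hi; simpa using hge
        · simpa [hi] using ha i
      · simp [sub_smul, sum_sub_distrib, ← hk]
    simp [sub_eq_zero.1 hsingle]

theorem lamMax_gen_eq_one (hpt : PointedGens u) (hne : ∀ i, u i ≠ 0) (hext : ExtremalGens u)
    (k : ι) : lamMax u (u k) = 1 := by
  refine IsGreatest.csSup_eq ⟨⟨Pi.single k 1, fun i => ?_, by simp, by simp⟩, ?_⟩
  · by_cases hi : i = k <;> simp [hi]
  · rintro t ⟨a, ha, hk, rfl⟩
    exact sum_le_one_of_gen_eq_sum_smul hpt hne hext ha hk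

end Generators

theorem isLatticePt_sum {n : ℕ} {ι : Type*} (s : Finset ι) {v : ι → (Fin n → ℝ)}
    (hv : ∀ i ∈ s, IsLatticePt (v i)) : IsLatticePt (∑ i ∈ s, v i) := by
  refine sum_induction v IsLatticePt (fun x y hx hy k => ?_) (fun _ => ⟨0, by simp⟩) hv
  obtain ⟨a, ha⟩ := hx k
  obtain ⟨b, hb⟩ := hy k
  exact ⟨a + b, by simp [ha, hb]⟩

theorem lamMax_sum_gens_eq_card {n : ℕ} {ι κ : Type*} [Fintype ι] [DecidableEq ι]
    [Fintype κ] {u : ι → (Fin n → ℝ)} (hpt : PointedGens u) (hne : ∀ i, u i ≠ 0)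
    (hext : ExtremalGens u) {f : κ → ι} {L : (Fin n → ℝ) →ₗ[ℝ] ℝ}
    (hL : ∀ x ∈ coneOf (u ∘ f), lamMax u x = L x)
    (s : Finset κ) : lamMax u (∑ i ∈ s, u (f i)) = s.card := by
  have hgen : ∀ i, L (u (f i)) = 1 := fun i =>
    (hL _ (mem_coneOf_self i)).symm.trans (lamMax_gen_eq_one hpt hne hext (f i))
  rw [hL _ (by simpa using sum_smul_mem_coneOf (u := u ∘ f) (s := s) (a := 1) (by simp)),
    map_sum]
  simp [hgen]

theorem exists_pos_forall_mul_le {ι : Type*} (s : Finset ι) (c d : ι → ℝ)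
    (hd : ∀ i ∈ s, 0 < d i) :
    ∃ ε > 0, ∀ i ∈ s, ε * c i ≤ d i := by
  have hsmall : ∀ᶠ ε in nhdsWithin (0 : ℝ) (Set.Ioi 0), ∀ i ∈ s, ε * c i < d i :=
    (Filter.eventually_all_finset s).2 fun i hi =>
      ((tendsto_nhdsWithin_of_tendsto_nhds (continuous_id.mul continuous_const).continuousAt
        ).eventually_lt_const (by simpa using hd i hi))
  obtain ⟨ε, hε, hεpos⟩ := (hsmall.and self_mem_nhdsWithin).exists
  exact ⟨ε, hεpos, fun i hi => (hε i hi).le⟩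

section Simplicial

variable {n : ℕ} {ι κ : Type*} [Fintype ι] [Fintype κ] {u : κ → (Fin n → ℝ)}
  (b : Module.Basis ι ℝ (Fin n → ℝ))

theorem mem_coneOf_basis_iff {x : Fin n → ℝ} :
    x ∈ coneOf ⇑b ↔ ∀ i, 0 ≤ b.repr x i := by
  constructor
  · rintro ⟨a, ha, rfl⟩
    simpa only [b.repr_sum_self] using ha
  · exact fun h => ⟨fun i => b.repr x i, h, (b.sum_repr x).symm⟩

theorem mem_interior_coneOf_basis {x : Fin n → ℝ} (hx : ∀ i, 0 < b.repr x i) :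
    x ∈ interior (coneOf ⇑b) := by
  have hpos : ∀ᶠ y in nhds x, ∀ i, 0 < b.coord i y := Filter.eventually_all.2 fun i =>
    ((b.coord i).continuous_of_finiteDimensional.tendsto x).eventually_const_lt (hx i)
  exact mem_interior_iff_mem_nhds.2 <|
    hpos.mono fun y hy => (mem_coneOf_basis_iff b).2 fun i => (hy i).le

theorem exists_coord_eq_zero_mem_interior (hγ : coneOf ⇑b ⊆ coneOf u) {x : Fin n → ℝ}
    (hx : x ∈ coneOf u) (hxγ : x ∉ coneOf ⇑b) :
    ∃ j p, b.repr p j = 0 ∧ p ∈ interior (coneOf u) := by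
  obtain ⟨j, hj⟩ : ∃ j, b.repr x j < 0 := by
    simpa [mem_coneOf_basis_iff] using hxγ
  refine ⟨j, (-b.repr x j) • ∑ i, b i + x, by simp, ?_⟩
  refine add_mem_interior_coneOf (smul_mem_interior_coneOf (neg_pos.2 hj) ?_) hx
  exact interior_mono hγ (mem_interior_coneOf_basis b fun k => by simp)

theorem sum_erase_smul_mem_interior [DecidableEq ι] (hγ : coneOf ⇑b ⊆ coneOf u) {j : ι}
    {p : Fin n → ℝ} (hpj : b.repr p j = 0) (hp : p ∈ interior (coneOf u))
    {d : ι → ℝ} (hd : ∀ i ≠ j, 0 < d i) :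
    ∑ i ∈ univ.erase j, d i • b i ∈ interior (coneOf u) := by
  set c := b.repr p
  obtain ⟨ε, hε, hεd⟩ := exists_pos_forall_mul_le (univ.erase j) c d
    fun i hi => hd i (ne_of_mem_erase hi)
  have hp_facet : p = ∑ i ∈ univ.erase j, c i • b i := by
    rw [sum_erase _ (by simp [hpj]), b.sum_repr]
  have hsplit : ∑ i ∈ univ.erase j, d i • b i
      = ε • p + ∑ i ∈ univ.erase j, (d i - ε * c i) • b i := by
    rw [hp_facet, smul_sum, ← sum_add_distrib]
    exact sum_congr rfl fun i _ => by rw [smul_smul, ← add_smul, add_sub_cancel]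
  rw [hsplit]
  exact add_mem_interior_coneOf (smul_mem_interior_coneOf hε hp)
    (hγ (sum_smul_mem_coneOf fun i hi => sub_nonneg.2 (hεd i hi)))

end Simplicial

theorem nonsimplicial_interior_facet_general {n s : ℕ} (u : Fin s → (Fin n → ℝ))
    (hpt : PointedGens u)
    (hprim : ∀ i, IsPrimitive (u i)) (hext : ExtremalGens u)
    (hns : ∀ f : Fin n → Fin s, coneOf u ≠ coneOf (u ∘ f))
    (f : Fin n → Fin s) (hfli : LinearIndependent ℝ (u ∘ f))
    (hγ : coneOf (u ∘ f) ⊆ coneOf u)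
    (hlin : ∃ L : (Fin n → ℝ) →ₗ[ℝ] ℝ, ∀ x ∈ coneOf (u ∘ f), lamMax u x = L x) :
    ∃ j : Fin n,
      (∀ b : Fin n → ℝ, (∀ i, i ≠ j → 0 < b i) →
        (∑ i ∈ Finset.univ.erase j, b i • u (f i)) ∈ interior (coneOf u)) ∧
      IsLatticePt (∑ i ∈ Finset.univ.erase j, u (f i)) ∧
      (∑ i ∈ Finset.univ.erase j, u (f i)) ∈ interior (coneOf u) ∧
      lamMax u (∑ i ∈ Finset.univ.erase j, u (f i)) = (n : ℝ) - 1 := by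
  obtain ⟨L, hL⟩ := hlin
  let B := basisOfLinearIndependentOfCardEqFinrank' (u ∘ f) hfli (by simp)
  have hB : ⇑B = u ∘ f := coe_basisOfLinearIndependentOfCardEqFinrank' _ _ _
  obtain ⟨x, hx, hxγ⟩ := Set.exists_of_ssubset (hγ.ssubset_of_ne (hns f).symm)
  rw [← hB] at hγ hxγ
  obtain ⟨j, p, hpj, hp⟩ := exists_coord_eq_zero_mem_interior B hγ hx hxγ
  have hfacet : ∀ b : Fin n → ℝ, (∀ i, i ≠ j → 0 < b i) →
      (∑ i ∈ Finset.univ.erase j, b i • u (f i)) ∈ interior (coneOf u) := fun b hb => by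
    simpa [hB] using sum_erase_smul_mem_interior B hγ hpj hp hb
  refine ⟨j, hfacet, isLatticePt_sum _ fun i _ => (hprim (f i)).1,
    by simpa using hfacet 1 fun _ _ => one_pos, ?_⟩
  rw [lamMax_sum_gens_eq_card hpt (fun i => (hprim i).2.1) hext hL, card_erase_of_mem (mem_univ j),
    card_univ, Fintype.card_fin, Nat.cast_pred j.pos]

/-- in a nonsimplicial full-dimensional strictly convex cone σ∨, if γ is
a cone spanned by n linearly independent primitive generators on which λ_max is linear,
then some facet of γ has relative interior contained in the interior of σ∨, and the
sum p of its n − 1 generators is an interior lattice point with λ_max(p) = n − 1. -/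
theorem nonsimplicial_interior_facet {n s : ℕ} (u : Fin s → (Fin n → ℝ))
    (hpt : PointedGens u) (hfd : FullDim u)
    (hprim : ∀ i, IsPrimitive (u i)) (hext : ExtremalGens u)
    (hns : ∀ f : Fin n → Fin s, coneOf u ≠ coneOf (u ∘ f))
    (f : Fin n → Fin s) (hfli : LinearIndependent ℝ (u ∘ f))
    (hγ : coneOf (u ∘ f) ⊆ coneOf u)
    (hlin : ∃ L : (Fin n → ℝ) →ₗ[ℝ] ℝ, ∀ x ∈ coneOf (u ∘ f), lamMax u x = L x) :
    ∃ j : Fin n,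
      (∀ b : Fin n → ℝ, (∀ i, i ≠ j → 0 < b i) →
        (∑ i ∈ Finset.univ.erase j, b i • u (f i)) ∈ interior (coneOf u)) ∧
      IsLatticePt (∑ i ∈ Finset.univ.erase j, u (f i)) ∧
      (∑ i ∈ Finset.univ.erase j, u (f i)) ∈ interior (coneOf u) ∧
      lamMax u (∑ i ∈ Finset.univ.erase j, u (f i)) = (n : ℝ) - 1 :=
  nonsimplicial_interior_facet_general u hpt hprim hext hns f hfli hγ hlin
end
end

section
/- Let σ∨ be a full-dimensional strictly convex rational polyhedral cone with primitive ray generators u₁,…,u_s. Then λ_max: σ∨ → ℝ is piecewise linear; more precisely, σ∨ is the union of the cones over the lower faces of Q = conv{u₁,…,u_s}, and λ_max is linear on the cone over each lower face of Q. -/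
/-!
`lamMax u x` is the value of the linear program `max {∑ aᵢ | a ≥ 0, ∑ aᵢ • uᵢ = x}`. Finitely
generated cones are closed (conical Carathéodory), so Farkas' lemma gives strong duality:
`lamMax u x = min {l x | l (uᵢ) ≥ 1 for all i}`. A point `z ∈ Q` with `lamMax u z = 1` then lies on
the face of `Q` exposed by an optimal `l`, and `lamMax ≡ 1` on that face since `l ≥ lamMax` on `Q`.
On the cone over a lower face `F`, `lamMax` is positively homogeneous and reads off the scale
factor of each point, so the affine span of `F` misses the origin; the linear functional equal to
`1` on `F` agrees with `lamMax` on the cone over `F`.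
-/

open Finset

noncomputable section

section Cone

variable {E : Type*} [AddCommGroup E] [Module ℝ E] {ι : Type*}

lemma PointedCone.mem_hull_range_iff [Fintype ι] {w : ι → E} {x : E} :
    x ∈ PointedCone.hull ℝ (Set.range w) ↔
      ∃ a : ι → ℝ, (∀ i, 0 ≤ a i) ∧ ∑ i, a i • w i = x := by
  rw [PointedCone.hull, Submodule.mem_span_range_iff_exists_fun]
  constructor
  · rintro ⟨c, rfl⟩
    exact ⟨fun i => c i, fun i => (c i).2, rfl⟩
  · rintro ⟨a, ha, rfl⟩
    exact ⟨fun i => ⟨a i, ha i⟩, rfl⟩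

lemma exists_erase_sum_smul_eq [DecidableEq ι] {w : ι → E} {J : Finset ι} {a c : ι → ℝ}
    (ha : ∀ i ∈ J, 0 ≤ a i) (hc : ∑ i ∈ J, c i • w i = 0) (hpos : ∃ j ∈ J, 0 < c j) :
    ∃ j ∈ J, ∃ b : ι → ℝ, (∀ i ∈ J, 0 ≤ b i) ∧
      ∑ i ∈ J.erase j, b i • w i = ∑ i ∈ J, a i • w i := by
  obtain ⟨j₀, hj₀, hmin⟩ := (J.filter (0 < c ·)).exists_min_image (fun i => a i / c i)
    (by simpa [Finset.Nonempty] using hpos)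
  rw [Finset.mem_filter] at hj₀
  set t := a j₀ / c j₀
  have ht : 0 ≤ t := div_nonneg (ha j₀ hj₀.1) hj₀.2.le
  refine ⟨j₀, hj₀.1, fun i => a i - t * c i, fun i hi => ?_, ?_⟩
  · rcases le_or_gt (c i) 0 with hci | hci
    · nlinarith [ha i hi]
    · have := hmin i (Finset.mem_filter.2 ⟨hi, hci⟩)
      rw [le_div_iff₀ hci] at this
      linarith
  · rw [Finset.sum_erase _ (by simp [t, div_mul_cancel₀ _ hj₀.2.ne'])]
    simp only [sub_smul, Finset.sum_sub_distrib, mul_smul, ← Finset.smul_sum, hc, smul_zero,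
      sub_zero]

/-- Carathéodory's theorem for cones. -/
theorem exists_linearIndepOn_sum_smul_eq [DecidableEq ι] (w : ι → E) (J : Finset ι)
    {a : ι → ℝ} (ha : ∀ i ∈ J, 0 ≤ a i) :
    ∃ K ⊆ J, LinearIndepOn ℝ w (K : Set ι) ∧ ∃ b : ι → ℝ, (∀ i ∈ K, 0 ≤ b i) ∧
      ∑ i ∈ K, b i • w i = ∑ i ∈ J, a i • w i := by
  induction J using Finset.strongInduction generalizing a with
  | _ J ih =>
  by_cases hli : LinearIndepOn ℝ w (J : Set ι)
  · exact ⟨J, subset_rfl, hli, a, ha, rfl⟩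
  obtain ⟨c, hc, j, hj, hcj⟩ : ∃ c : ι → ℝ, ∑ i ∈ J, c i • w i = 0 ∧ ∃ j ∈ J, 0 < c j := by
    simp only [linearIndepOn_finset_iff, not_forall] at hli
    obtain ⟨c, hc, j, hj, hcj⟩ := hli
    rcases lt_or_gt_of_ne hcj with hneg | hpos
    · exact ⟨-c, by simp [neg_smul, hc], j, hj, by simpa using hneg⟩
    · exact ⟨c, hc, j, hj, hpos⟩
  obtain ⟨j₀, hj₀, b, hb, hbsum⟩ := exists_erase_sum_smul_eq ha hc ⟨j, hj, hcj⟩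
  obtain ⟨K, hK, hli, b', hb', hb'sum⟩ :=
    ih (J.erase j₀) (Finset.erase_ssubset hj₀) (fun i hi => hb i (Finset.mem_of_mem_erase hi))
  exact ⟨K, hK.trans (Finset.erase_subset _ _), hli, b', hb', hb'sum.trans hbsum⟩

theorem PointedCone.isClosed_hull_range [TopologicalSpace E] [T2Space E]
    [IsTopologicalAddGroup E] [ContinuousSMul ℝ E] [Finite ι] (w : ι → E) :
    IsClosed (PointedCone.hull ℝ (Set.range w) : Set E) := by
  classical
  have := Fintype.ofFinite ι
  have hunion : (PointedCone.hull ℝ (Set.range w) : Set E) =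
      ⋃ (K : Finset ι) (_ : LinearIndepOn ℝ w (K : Set ι)),
        Fintype.linearCombination ℝ (fun k : K => w k) '' Set.Ici 0 := by
    ext x
    simp only [SetLike.mem_coe, PointedCone.mem_hull_range_iff, Set.mem_iUnion, Set.mem_image,
      Set.mem_Ici, Fintype.linearCombination_apply]
    constructor
    · rintro ⟨a, ha, rfl⟩
      obtain ⟨K, -, hK, b, hb, hbsum⟩ :=
        exists_linearIndepOn_sum_smul_eq w Finset.univ (a := a) (fun i _ => ha i)
      refine ⟨K, hK, fun k => b k, fun k => hb k k.2, ?_⟩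
      rw [Finset.sum_coe_sort K (fun i => b i • w i), hbsum]
    · rintro ⟨K, -, b, hb, rfl⟩
      rw [← PointedCone.mem_hull_range_iff]
      exact Submodule.sum_mem _ fun k _ =>
        PointedCone.smul_mem _ (hb k) (PointedCone.subset_hull ⟨k, rfl⟩)
  rw [hunion]
  refine isClosed_iUnion_of_finite fun K => isClosed_iUnion_of_finite fun hK => ?_
  exact (LinearMap.isClosedEmbedding_of_injective (LinearMap.ker_eq_bot.2
    hK.linearIndependent.fintypeLinearCombination_injective)).isClosedMap _ isClosed_Ici

lemma Convex.exists_sum_smul_eq_smul {F : Set E} (hF : Convex ℝ F) {x₀ : E} (hx₀ : x₀ ∈ F)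
    {s : Finset ι} {ν : ι → ℝ} {p : ι → E} (hν : ∀ i ∈ s, 0 ≤ ν i) (hp : ∀ i ∈ s, p i ∈ F) :
    ∃ y ∈ F, ∑ i ∈ s, ν i • p i = (∑ i ∈ s, ν i) • y := by
  rcases (Finset.sum_nonneg hν).eq_or_lt with hzero | hpos
  · refine ⟨x₀, hx₀, ?_⟩
    rw [← hzero, zero_smul]
    exact Finset.sum_eq_zero fun i hi => by
      rw [(Finset.sum_eq_zero_iff_of_nonneg hν).1 hzero.symm i hi, zero_smul]
  · refine ⟨s.centerMass ν p, hF.centerMass_mem hν hpos hp, ?_⟩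
    rw [Finset.centerMass, smul_inv_smul₀ hpos.ne']

theorem Convex.exists_linearMap_eq_one {F : Set E} (hF : Convex ℝ F)
    (hscale : ∀ x ∈ F, ∀ y ∈ F, ∀ c d : ℝ, 0 ≤ c → 0 ≤ d → c • x = d • y → c = d) :
    ∃ L : E →ₗ[ℝ] ℝ, ∀ x ∈ F, L x = 1 := by
  rcases F.eq_empty_or_nonempty with rfl | ⟨x₀, hx₀⟩
  · exact ⟨0, by simp⟩
  have h0 : (0 : E) ∉ affineSpan ℝ F := by
    intro h
    rw [← Subtype.range_coe (s := F)] at h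
    obtain ⟨s, μ, hμ, h0⟩ := eq_affineCombination_of_mem_affineSpan h
    rw [affineCombination_eq_linear_combination _ _ _ hμ] at h0
    -- split the affine dependence into its positive and negative parts
    obtain ⟨y, hy, hpos⟩ := hF.exists_sum_smul_eq_smul hx₀ (ν := fun i => max (μ i) 0)
      (p := Subtype.val) (s := s) (fun i _ => le_max_right _ _) (fun i _ => i.2)
    obtain ⟨y', hy', hneg⟩ := hF.exists_sum_smul_eq_smul hx₀ (ν := fun i => max (-μ i) 0)
      (p := Subtype.val) (s := s) (fun i _ => le_max_right _ _) (fun i _ => i.2)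
    have hsplit : ∀ i, μ i = max (μ i) 0 - max (-μ i) 0 := fun i => by
      rcases le_total 0 (μ i) with h | h <;> simp [h]
    have hvec : ∑ i ∈ s, max (μ i) 0 • (i : E) = ∑ i ∈ s, max (-μ i) 0 • (i : E) := by
      rw [← sub_eq_zero, ← Finset.sum_sub_distrib, h0]
      simp_rw [← sub_smul, ← hsplit]
    have := hscale y hy y' hy' _ _ (Finset.sum_nonneg fun i _ => le_max_right _ _)
      (Finset.sum_nonneg fun i _ => le_max_right _ _) (hpos.symm.trans (hvec.trans hneg))
    rw [Finset.sum_congr rfl fun i _ => hsplit i, Finset.sum_sub_distrib, this, sub_self] at hμ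
    exact zero_ne_one hμ
  have hx₀dir : x₀ ∉ (affineSpan ℝ F).direction := by
    rwa [← neg_mem_iff, ← zero_sub, ← vsub_eq_sub,
      AffineSubspace.vsub_right_mem_direction_iff_mem (mem_affineSpan ℝ hx₀)]
  obtain ⟨f, hfx₀, hf⟩ := Submodule.exists_dual_map_eq_bot_of_notMem hx₀dir inferInstance
  refine ⟨(f x₀)⁻¹ • f, fun x hx => ?_⟩
  have hfx : f (x - x₀) ∈ (affineSpan ℝ F).direction.map f := Submodule.mem_map_of_mem
    (AffineSubspace.vsub_mem_direction (mem_affineSpan ℝ hx) (mem_affineSpan ℝ hx₀))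
  rw [hf, Submodule.mem_bot] at hfx
  rw [map_sub, sub_eq_zero] at hfx
  rw [LinearMap.smul_apply, hfx, smul_eq_mul, inv_mul_cancel₀ hfx₀]

variable [Fintype ι]

lemma convexHull_range_eq_image_stdSimplex (u : ι → E) :
    convexHull ℝ (Set.range u) = Fintype.linearCombination ℝ u '' stdSimplex ℝ ι := by
  classical
  rw [← convexHull_basis_eq_stdSimplex, LinearMap.image_convexHull, ← Set.range_comp]
  congr 1
  ext x
  simp [Fintype.linearCombination_apply, ite_smul]

lemma mem_convexHull_range_iff {u : ι → E} {x : E} :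
    x ∈ convexHull ℝ (Set.range u) ↔
      ∃ a : ι → ℝ, (∀ i, 0 ≤ a i) ∧ ∑ i, a i = 1 ∧ x = ∑ i, a i • u i := by
  rw [convexHull_range_eq_image_stdSimplex]
  simp only [Set.mem_image, Fintype.linearCombination_apply, stdSimplex, Set.mem_ofPred_eq,
    and_assoc, eq_comm]

lemma sum_le_mul_of_sum_smul_eq_smul {w : ι → E} {z : E} {M : ℝ}
    (hz : z ∈ PointedCone.hull ℝ (Set.range w))
    (hM : ∀ a : ι → ℝ, (∀ i, 0 ≤ a i) → ∑ i, a i • w i = z → ∑ i, a i ≤ M)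
    {a : ι → ℝ} (ha : ∀ i, 0 ≤ a i) {r : ℝ} (hr : 0 ≤ r) (har : ∑ i, a i • w i = r • z) :
    ∑ i, a i ≤ r * M := by
  by_contra! hlt
  obtain ⟨a₀, ha₀, rfl⟩ := PointedCone.mem_hull_range_iff.1 hz
  -- adding `k • a` to `a₀` and rescaling gives representations with arbitrarily large sum
  set k := (|M - ∑ i, a₀ i| + 1) / (∑ i, a i - r * M)
  have hk : 0 ≤ k := div_nonneg (by positivity) (sub_pos.2 hlt).le
  have hkr : 0 < 1 + k * r := by positivity
  have hsum := hM (fun i => (1 + k * r)⁻¹ * (a₀ i + k * a i))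
    (fun i => by have := ha₀ i; have := ha i; positivity) (by
      simp only [mul_smul, add_smul, ← Finset.smul_sum, Finset.sum_add_distrib, har]
      match_scalars
      field_simp)
  rw [← Finset.mul_sum, inv_mul_le_iff₀ hkr, Finset.sum_add_distrib, ← Finset.mul_sum] at hsum
  have hkδ : k * (∑ i, a i - r * M) = |M - ∑ i, a₀ i| + 1 :=
    div_mul_cancel₀ _ (sub_pos.2 hlt).ne'
  linarith [le_abs_self (M - ∑ i, a₀ i)]

/-- Strong duality for the linear program `max {∑ aᵢ | a ≥ 0, ∑ aᵢ • wᵢ = z}`. -/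
theorem exists_dual_one_le_of_forall_sum_le [TopologicalSpace E] [T2Space E]
    [IsTopologicalAddGroup E] [ContinuousSMul ℝ E] [LocallyConvexSpace ℝ E]
    {w : ι → E} {z : E} {M : ℝ} (hz : z ∈ PointedCone.hull ℝ (Set.range w))
    (hM : ∀ a : ι → ℝ, (∀ i, 0 ≤ a i) → ∑ i, a i • w i = z → ∑ i, a i ≤ M) :
    ∃ l : StrongDual ℝ E, (∀ i, 1 ≤ l (w i)) ∧ l z ≤ M := by
  let lift : Option ι → E × ℝ := fun o => o.elim (-(z, M)) fun i => (w i, 1)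
  let T : ProperCone ℝ (E × ℝ) := ⟨PointedCone.hull ℝ (Set.range lift),
    PointedCone.isClosed_hull_range lift⟩
  have hT : ((0 : E), (1 : ℝ)) ∉ T := by
    intro h
    obtain ⟨a, ha, hsum⟩ := PointedCone.mem_hull_range_iff.1 h
    simp only [Fintype.sum_option, lift, Option.elim, Prod.smul_mk, smul_eq_mul, mul_one,
      smul_neg, Prod.neg_mk] at hsum
    rw [Prod.ext_iff, Prod.fst_add, Prod.snd_add, Prod.fst_sum, Prod.snd_sum] at hsum
    have := sum_le_mul_of_sum_smul_eq_smul hz hM (fun i => ha (some i)) (ha none)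
      (neg_add_eq_zero.1 hsum.1).symm
    linarith [hsum.2]
  obtain ⟨φ, hφT, hφ⟩ := T.hyperplane_separation_point hT
  have hsplit : ∀ x t, φ (x, t) = φ (x, 0) + t * φ (0, 1) := fun x t => by
    rw [← smul_eq_mul, ← map_smul, ← map_add, Prod.smul_mk, Prod.mk_add_mk]; simp
  have hlift : ∀ o, 0 ≤ φ (lift o) := fun o => hφT _ (PointedCone.subset_hull ⟨o, rfl⟩)
  have hc : 0 < -φ (0, 1) := neg_pos.2 hφ
  refine ⟨(-φ (0, 1))⁻¹ • φ.comp (ContinuousLinearMap.inl ℝ E ℝ), fun i => ?_, ?_⟩ <;>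
    simp only [smul_apply, ContinuousLinearMap.comp_apply, ContinuousLinearMap.inl_apply,
      smul_eq_mul]
  · have := hlift (some i)
    simp only [lift, Option.elim] at this
    rw [hsplit] at this
    rw [le_inv_mul_iff₀ hc]
    linarith
  · have := hlift none
    simp only [lift, Option.elim, map_neg] at this
    rw [hsplit] at this
    rw [inv_mul_le_iff₀ hc]
    linarith

end Cone

def IsLowerFace {n : ℕ} {ι : Type*} [Fintype ι] (u : ι → (Fin n → ℝ))
    (F : Set (Fin n → ℝ)) : Prop :=
  IsExposed ℝ (convexHull ℝ (Set.range u)) F ∧ ∀ x ∈ F, lamMax u x = 1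

def coneOver {n : ℕ} (F : Set (Fin n → ℝ)) : Set (Fin n → ℝ) :=
  {y | ∃ c : ℝ, 0 ≤ c ∧ ∃ x ∈ F, y = c • x}

section LamMax

open scoped Pointwise

variable {n : ℕ} {ι : Type*} [Fintype ι] {u : ι → (Fin n → ℝ)}

lemma mem_coneOf_iff_mem_hull {x : Fin n → ℝ} :
    x ∈ coneOf u ↔ x ∈ PointedCone.hull ℝ (Set.range u) := by
  rw [PointedCone.mem_hull_range_iff]
  exact exists_congr fun a => and_congr_right' eq_comm

lemma convexHull_subset_coneOf : convexHull ℝ (Set.range u) ⊆ coneOf u := by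
  intro x hx
  obtain ⟨a, ha, -, rfl⟩ := mem_convexHull_range_iff.1 hx
  exact ⟨a, ha, rfl⟩

lemma one_mem_reprSums {x : Fin n → ℝ} (hx : x ∈ convexHull ℝ (Set.range u)) :
    1 ∈ reprSums u x := by
  obtain ⟨a, ha, hsum, rfl⟩ := mem_convexHull_range_iff.1 hx
  exact ⟨a, ha, rfl, hsum.symm⟩

lemma le_of_mem_reprSums {l : StrongDual ℝ (Fin n → ℝ)} (hl : ∀ i, 1 ≤ l (u i))
    {x : Fin n → ℝ} {t : ℝ} (ht : t ∈ reprSums u x) : t ≤ l x := by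
  obtain ⟨a, ha, rfl, rfl⟩ := ht
  rw [map_sum]
  exact Finset.sum_le_sum fun i _ => by
    rw [map_smul, smul_eq_mul]
    exact le_mul_of_one_le_right (ha i) (hl i)

lemma PointedGens.zero_notMem_convexHull (hpt : PointedGens u) (hu : ∀ i, u i ≠ 0) :
    (0 : Fin n → ℝ) ∉ convexHull ℝ (Set.range u) := by
  classical
  intro h0
  obtain ⟨a, ha, hsum, h0⟩ := mem_convexHull_range_iff.1 h0
  obtain ⟨i, hi⟩ : ∃ i, 0 < a i := by
    by_contra! h
    linarith [Finset.sum_nonpos fun i (_ : i ∈ Finset.univ) => h i]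
  -- `a i • u i` and its negative, the sum of the other terms, both lie in the cone
  have hmem : a i • u i ∈ coneOf u :=
    ⟨fun j => if j = i then a i else 0, fun j => by positivity, by simp [ite_smul]⟩
  have hneg : -(a i • u i) ∈ coneOf u := by
    refine ⟨fun j => if j = i then 0 else a j, fun j => by have := ha j; positivity, ?_⟩
    have hterm : ∀ j, (if j = i then 0 else a j) • u j =
        a j • u j - if j = i then a i • u i else 0 := fun j => by
      split_ifs with h <;> simp [h]
    rw [Finset.sum_congr rfl fun j _ => hterm j, Finset.sum_sub_distrib, Finset.sum_ite_eq',
      if_pos (Finset.mem_univ i), ← h0, zero_sub]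
  exact hu i ((smul_eq_zero.1 (hpt _ hmem hneg)).resolve_left hi.ne')

lemma PointedGens.exists_dual_one_le (hpt : PointedGens u) (hu : ∀ i, u i ≠ 0) :
    ∃ f : StrongDual ℝ (Fin n → ℝ), ∀ i, 1 ≤ f (u i) := by
  obtain ⟨f, c, hf0, hc⟩ := geometric_hahn_banach_point_closed (convex_convexHull ℝ _)
    (Set.Finite.isClosed_convexHull ℝ (Set.finite_range u)) (hpt.zero_notMem_convexHull hu)
  have hc0 : 0 < c := by simpa using hf0
  refine ⟨c⁻¹ • f, fun i => ?_⟩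
  rw [smul_apply, smul_eq_mul, le_inv_mul_iff₀ hc0, mul_one]
  exact (hc _ (subset_convexHull ℝ _ ⟨i, rfl⟩)).le

lemma bddAbove_reprSums (hpt : PointedGens u) (hu : ∀ i, u i ≠ 0) (x : Fin n → ℝ) :
    BddAbove (reprSums u x) := by
  obtain ⟨f, hf⟩ := hpt.exists_dual_one_le hu
  exact ⟨f x, fun t ht => le_of_mem_reprSums hf ht⟩

lemma isClosed_reprSums (x : Fin n → ℝ) : IsClosed (reprSums u x) := by
  have : reprSums u x = (fun t => (x, t)) ⁻¹'
      PointedCone.hull ℝ (Set.range fun i => (u i, (1 : ℝ))) := by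
    ext t
    simp only [Set.mem_preimage, SetLike.mem_coe, PointedCone.mem_hull_range_iff, Prod.ext_iff,
      Prod.fst_sum, Prod.snd_sum, Prod.smul_mk, smul_eq_mul, mul_one]
    exact exists_congr fun a => and_congr_right' (and_congr eq_comm eq_comm)
  rw [this]
  exact (PointedCone.isClosed_hull_range _).preimage (by fun_prop)

lemma isGreatest_lamMax (hpt : PointedGens u) (hu : ∀ i, u i ≠ 0) {x : Fin n → ℝ}
    (hx : x ∈ coneOf u) : IsGreatest (reprSums u x) (lamMax u x) := by
  obtain ⟨a, ha, hax⟩ := hx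
  exact ⟨(isClosed_reprSums x).csSup_mem ⟨_, a, ha, hax, rfl⟩ (bddAbove_reprSums hpt hu x),
    fun t ht => le_csSup (bddAbove_reprSums hpt hu x) ht⟩

lemma lamMax_zero (hpt : PointedGens u) (hu : ∀ i, u i ≠ 0) : lamMax u 0 = 0 := by
  obtain ⟨f, hf⟩ := hpt.exists_dual_one_le hu
  refine IsGreatest.csSup_eq ⟨⟨0, fun _ => le_rfl, by simp, by simp⟩, ?_⟩
  intro t ht
  simpa using le_of_mem_reprSums hf ht

lemma smul_mem_reprSums {c : ℝ} (hc : 0 ≤ c) {x : Fin n → ℝ} {t : ℝ}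
    (ht : t ∈ reprSums u x) : c * t ∈ reprSums u (c • x) := by
  obtain ⟨a, ha, rfl, rfl⟩ := ht
  exact ⟨fun i => c * a i, fun i => mul_nonneg hc (ha i),
    by simp only [Finset.smul_sum, smul_smul], by rw [Finset.mul_sum]⟩

lemma lamMax_smul_of_pos {c : ℝ} (hc : 0 < c) (x : Fin n → ℝ) :
    lamMax u (c • x) = c * lamMax u x := by
  have : reprSums u (c • x) = c • reprSums u x := by
    ext t
    refine ⟨fun ht => Set.mem_smul_set.2 ⟨c⁻¹ * t, ?_, by simp [hc.ne']⟩, ?_⟩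
    · simpa [hc.ne'] using smul_mem_reprSums (inv_nonneg.2 hc.le) ht
    · rintro ⟨t, ht, rfl⟩
      exact smul_mem_reprSums hc.le ht
  rw [lamMax, this, Real.sSup_smul_of_nonneg hc.le, smul_eq_mul, lamMax]

lemma lamMax_smul (hpt : PointedGens u) (hu : ∀ i, u i ≠ 0) {c : ℝ} (hc : 0 ≤ c)
    (x : Fin n → ℝ) : lamMax u (c • x) = c * lamMax u x := by
  rcases hc.eq_or_lt with rfl | hc
  · rw [zero_smul, zero_mul, lamMax_zero hpt hu]
  · exact lamMax_smul_of_pos hc x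

lemma exists_dual_eq_lamMax (hpt : PointedGens u) (hu : ∀ i, u i ≠ 0) {x : Fin n → ℝ}
    (hx : x ∈ coneOf u) :
    ∃ l : StrongDual ℝ (Fin n → ℝ), (∀ i, 1 ≤ l (u i)) ∧ l x = lamMax u x := by
  obtain ⟨l, hl, hlx⟩ := exists_dual_one_le_of_forall_sum_le (mem_coneOf_iff_mem_hull.1 hx)
    fun a ha hax => (isGreatest_lamMax hpt hu hx).2 ⟨a, ha, hax.symm, rfl⟩
  exact ⟨l, hl, hlx.antisymm (le_of_mem_reprSums hl (isGreatest_lamMax hpt hu hx).1)⟩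

lemma exists_isLowerFace_mem (hpt : PointedGens u) (hu : ∀ i, u i ≠ 0) {z : Fin n → ℝ}
    (hz : z ∈ convexHull ℝ (Set.range u)) (hz1 : lamMax u z = 1) :
    ∃ F, IsLowerFace u F ∧ z ∈ F := by
  obtain ⟨l, hl, hlz⟩ := exists_dual_eq_lamMax hpt hu (convexHull_subset_coneOf hz)
  rw [hz1] at hlz
  have hlQ : ∀ y ∈ convexHull ℝ (Set.range u), l z ≤ l y := fun y hy =>
    hlz ▸ le_of_mem_reprSums hl (one_mem_reprSums hy)
  refine ⟨{x ∈ convexHull ℝ (Set.range u) | ∀ y ∈ convexHull ℝ (Set.range u), (-l) y ≤ (-l) x},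
    ⟨fun _ => ⟨-l, rfl⟩, ?_⟩, hz, fun y hy => by simpa using hlQ y hy⟩
  rintro x ⟨hxQ, hxmin⟩
  have hlx : l x ≤ 1 := hlz ▸ by simpa using hxmin z hz
  exact IsGreatest.csSup_eq ⟨one_mem_reprSums hxQ,
    fun t ht => (le_of_mem_reprSums hl ht).trans hlx⟩

lemma exists_isLowerFace_smul_mem (hpt : PointedGens u) (hu : ∀ i, u i ≠ 0)
    {x : Fin n → ℝ} (hx : x ∈ coneOf u) (hpos : 0 < lamMax u x) :
    ∃ F, IsLowerFace u F ∧ ∃ z ∈ F, x = lamMax u x • z := by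
  obtain ⟨a, ha, rfl, hsum⟩ := (isGreatest_lamMax hpt hu hx).1
  set lam := lamMax u (∑ i, a i • u i)
  have hz : lam⁻¹ • ∑ i, a i • u i ∈ convexHull ℝ (Set.range u) :=
    mem_convexHull_range_iff.2 ⟨fun i => lam⁻¹ * a i, fun i => by have := ha i; positivity,
      by rw [← Finset.mul_sum, ← hsum, inv_mul_cancel₀ hpos.ne'], by
        simp only [Finset.smul_sum, smul_smul]⟩
  have hz1 : lamMax u (lam⁻¹ • ∑ i, a i • u i) = 1 := by
    rw [lamMax_smul_of_pos (inv_pos.2 hpos), inv_mul_cancel₀ hpos.ne']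
  obtain ⟨F, hF, hzF⟩ := exists_isLowerFace_mem hpt hu hz hz1
  exact ⟨F, hF, _, hzF, (smul_inv_smul₀ hpos.ne' _).symm⟩

lemma exists_isLowerFace_mem_coneOver [Nonempty ι] (hpt : PointedGens u) (hu : ∀ i, u i ≠ 0)
    {x : Fin n → ℝ} (hx : x ∈ coneOf u) : ∃ F, IsLowerFace u F ∧ x ∈ coneOver F := by
  obtain ⟨a, ha, hax, hsum⟩ := (isGreatest_lamMax hpt hu hx).1
  have hnonneg : 0 ≤ lamMax u x := hsum ▸ Finset.sum_nonneg fun i _ => ha i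
  rcases hnonneg.eq_or_lt with hzero | hpos
  · -- then `x = 0`, which lies in the cone over any nonempty lower face
    have hx0 : x = 0 := by
      have := (Finset.sum_eq_zero_iff_of_nonneg fun i _ => ha i).1 (hsum.symm.trans hzero.symm)
      simp [hax, this]
    obtain ⟨i⟩ := ‹Nonempty ι›
    have hui : u i ∈ convexHull ℝ (Set.range u) := subset_convexHull ℝ _ ⟨i, rfl⟩
    obtain ⟨F, hF, z, hz, -⟩ := exists_isLowerFace_smul_mem hpt hu (convexHull_subset_coneOf hui)
      (zero_lt_one.trans_le ((isGreatest_lamMax hpt hu (convexHull_subset_coneOf hui)).2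
        (one_mem_reprSums hui)))
    exact ⟨F, hF, 0, le_rfl, z, hz, by rw [hx0, zero_smul]⟩
  · obtain ⟨F, hF, z, hz, hxz⟩ := exists_isLowerFace_smul_mem hpt hu hx hpos
    exact ⟨F, hF, _, hnonneg, z, hz, hxz⟩

lemma IsLowerFace.coneOver_subset_coneOf {F : Set (Fin n → ℝ)} (hF : IsLowerFace u F) :
    coneOver F ⊆ coneOf u := by
  rintro _ ⟨c, hc, x, hx, rfl⟩
  obtain ⟨a, ha, hax⟩ := convexHull_subset_coneOf (hF.1.subset hx)
  exact ⟨fun i => c * a i, fun i => mul_nonneg hc (ha i), by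
    simp only [hax, Finset.smul_sum, smul_smul]⟩

lemma IsLowerFace.exists_linearMap_lamMax_eq (hpt : PointedGens u) (hu : ∀ i, u i ≠ 0)
    {F : Set (Fin n → ℝ)} (hF : IsLowerFace u F) :
    ∃ L : (Fin n → ℝ) →ₗ[ℝ] ℝ, ∀ y ∈ coneOver F, lamMax u y = L y := by
  have hscale : ∀ c : ℝ, 0 ≤ c → ∀ x ∈ F, lamMax u (c • x) = c := fun c hc x hx => by
    rw [lamMax_smul hpt hu hc, hF.2 x hx, mul_one]
  obtain ⟨L, hL⟩ := (hF.1.convex (convex_convexHull ℝ _)).exists_linearMap_eq_one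
    fun x hx y hy c d hc hd hxy => by rw [← hscale c hc x hx, hxy, hscale d hd y hy]
  refine ⟨L, ?_⟩
  rintro _ ⟨c, hc, x, hx, rfl⟩
  rw [hscale c hc x hx, map_smul, hL x hx, smul_eq_mul, mul_one]

end LamMax

theorem lamMax_piecewise_linear_general {n s : ℕ} (u : Fin s → (Fin n → ℝ)) (hs : 0 < s)
    (hpt : PointedGens u)
    (hprim : ∀ i, IsPrimitive (u i)) :
    (coneOf u =
      ⋃ F ∈ {F : Set (Fin n → ℝ) |
          IsExposed ℝ (convexHull ℝ (Set.range u)) F ∧ ∀ x ∈ F, lamMax u x = 1},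
        {y | ∃ c : ℝ, 0 ≤ c ∧ ∃ x ∈ F, y = c • x}) ∧
    (∀ F : Set (Fin n → ℝ),
      IsExposed ℝ (convexHull ℝ (Set.range u)) F → (∀ x ∈ F, lamMax u x = 1) →
      ∃ L : (Fin n → ℝ) →ₗ[ℝ] ℝ,
        ∀ y ∈ {y | ∃ c : ℝ, 0 ≤ c ∧ ∃ x ∈ F, y = c • x}, lamMax u y = L y) := by
  have hu : ∀ i, u i ≠ 0 := fun i => (hprim i).2.1
  have : Nonempty (Fin s) := ⟨⟨0, hs⟩⟩
  refine ⟨Set.Subset.antisymm (fun x hx => ?_) (Set.iUnion₂_subset fun F hF => ?_),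
    fun F hexp hF1 => IsLowerFace.exists_linearMap_lamMax_eq hpt hu ⟨hexp, hF1⟩⟩
  · obtain ⟨F, hF, hxF⟩ := exists_isLowerFace_mem_coneOver hpt hu hx
    exact Set.mem_iUnion₂.2 ⟨F, hF, hxF⟩
  · exact IsLowerFace.coneOver_subset_coneOf hF

/-- λ_max is piecewise linear: σ∨ is the union of the cones over the
lower faces of Q = conv{u₁,…,u_s} (the exposed faces on which λ_max ≡ 1), and λ_max
is linear on the cone over each lower face. -/
theorem lamMax_piecewise_linear {n s : ℕ} (u : Fin s → (Fin n → ℝ)) (hs : 0 < s)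
    (hpt : PointedGens u) (hfd : FullDim u)
    (hprim : ∀ i, IsPrimitive (u i)) (hext : ExtremalGens u) :
    (coneOf u =
      ⋃ F ∈ {F : Set (Fin n → ℝ) |
          IsExposed ℝ (convexHull ℝ (Set.range u)) F ∧ ∀ x ∈ F, lamMax u x = 1},
        {y | ∃ c : ℝ, 0 ≤ c ∧ ∃ x ∈ F, y = c • x}) ∧
    (∀ F : Set (Fin n → ℝ),
      IsExposed ℝ (convexHull ℝ (Set.range u)) F → (∀ x ∈ F, lamMax u x = 1) →
      ∃ L : (Fin n → ℝ) →ₗ[ℝ] ℝ,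
        ∀ y ∈ {y | ∃ c : ℝ, 0 ≤ c ∧ ∃ x ∈ F, y = c • x}, lamMax u y = L y) :=
  lamMax_piecewise_linear_general u hs hpt hprim
end
end

section
/- Let u₁,…,u_n be a ℤ-basis of M = ℤⁿ dual to v₁,…,v_n, let a₁,…,a_n be positive rationals with a₁ = min aᵢ = n and aⱼ > n for some j, and suppose v₀ = b·(−a₂⋯a_n v₁ − ⋯ − a₁⋯âᵢ⋯a_n vᵢ − ⋯ − a₁⋯a_{n−1} v_n) is a primitive lattice vector in the dual lattice (b > 0 rational). Then d₀ := −⟨a₁u₁, v₀⟩ = b·a₁⋯a_n is a (positive) integer, and the point p = u₁ + ⋯ + u_n satisfies ⟨p, v₀⟩ ≥ −d₀ + 1. -/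
open Finset

noncomputable section

lemma pairing_sum_right {n : ℕ} {ι : Type*} [Fintype ι] (x : Fin n → ℝ)
    (f : ι → (Fin n → ℝ)) : pairing x (∑ i, f i) = ∑ i, pairing x (f i) := by
  simp [pairing, Finset.mul_sum]
  rw [Finset.sum_comm]

lemma pairing_smul_right {n : ℕ} (x y : Fin n → ℝ) (c : ℝ) :
    pairing x (c • y) = c * pairing x y := by
  simp only [pairing, Pi.smul_apply, smul_eq_mul]
  rw [Finset.mul_sum]
  exact Finset.sum_congr rfl fun i _ => by ring

lemma pairing_smul_left {n : ℕ} (x y : Fin n → ℝ) (c : ℝ) :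
    pairing (c • x) y = c * pairing x y := by
  simp only [pairing, Pi.smul_apply, smul_eq_mul]
  rw [Finset.mul_sum]
  exact Finset.sum_congr rfl fun i _ => by ring

lemma pairing_sum_left {n : ℕ} {ι : Type*} [Fintype ι] (f : ι → (Fin n → ℝ))
    (y : Fin n → ℝ) : pairing (∑ i, f i) y = ∑ i, pairing (f i) y := by
  simp [pairing, Finset.sum_mul]
  rw [Finset.sum_comm]

/-- Case 1 computation: with u₁,…,uₙ a ℤ-basis dual to v₁,…,vₙ,
positive rationals aᵢ with a₁ = min aᵢ = n and some aⱼ > n, and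
v₀ = b·(−Σᵢ (Πⱼ≠ᵢ aⱼ) vᵢ) a primitive lattice vector (b > 0), the number
d₀ = −⟨a₁u₁, v₀⟩ = b·a₁⋯aₙ is a positive integer and p = u₁ + ⋯ + uₙ satisfies
⟨p, v₀⟩ ≥ −d₀ + 1. -/
theorem simplex_case_computation {n : ℕ} [NeZero n] (u v : Fin n → (Fin n → ℝ))
    (hu : ∀ x : Fin n → ℝ, IsLatticePt x ↔ ∃ z : Fin n → ℤ,
      x = ∑ i, (z i : ℝ) • u i)
    (hv : ∀ x : Fin n → ℝ, IsLatticePt x ↔ ∃ z : Fin n → ℤ,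
      x = ∑ i, (z i : ℝ) • v i)
    (hdual : ∀ i j, pairing (u i) (v j) = if i = j then 1 else 0)
    (a : Fin n → ℚ) (ha : ∀ i, 0 < a i) (h0 : a 0 = (n : ℚ))
    (hmin : ∀ i, a 0 ≤ a i) (hj : ∃ j, (n : ℚ) < a j)
    (b : ℚ) (hb : 0 < b) (v0 : Fin n → ℝ)
    (hv0 : v0 = (b : ℝ) • ∑ i, (-(∏ j ∈ Finset.univ.erase i, (a j : ℝ))) • v i)
    (hv0prim : IsPrimitive v0) :
    (∃ d : ℤ, ((d : ℝ) = (b : ℝ) * ∏ i, (a i : ℝ)) ∧ 0 < d) ∧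
    pairing ((a 0 : ℝ) • u 0) v0 = -((b : ℝ) * ∏ i, (a i : ℝ)) ∧
    pairing (∑ i, u i) v0 ≥ -((b : ℝ) * ∏ i, (a i : ℝ)) + 1 := by
  have hbR : (0:ℝ) < (b:ℝ) := by exact_mod_cast hb
  have haR : ∀ i, (0:ℝ) < (a i : ℝ) := fun i => by exact_mod_cast ha i
  -- pairing (u i) v0 = -(b * ∏_{j ≠ i} a j)
  have key : ∀ i, pairing (u i) v0 = -((b:ℝ) * ∏ j ∈ Finset.univ.erase i, (a j : ℝ)) := by
    intro i
    rw [hv0, pairing_smul_right, pairing_sum_right]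
    have : ∀ k : Fin n, pairing (u i) ((-(∏ j ∈ Finset.univ.erase k, (a j : ℝ))) • v k)
        = (-(∏ j ∈ Finset.univ.erase k, (a j : ℝ))) * (if i = k then 1 else 0) := by
      intro k; rw [pairing_smul_right, hdual]
    rw [Finset.sum_congr rfl fun k _ => this k]
    simp [Finset.sum_ite_eq]
  -- integrality: v0 is a lattice point
  obtain ⟨z, hz⟩ := (hv v0).1 hv0prim.1
  have hcoef : ∀ i, ((z i : ℝ)) = -((b:ℝ) * ∏ j ∈ Finset.univ.erase i, (a j : ℝ)) := by
    intro i
    have : pairing (u i) v0 = (z i : ℝ) := by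
      rw [hz, pairing_sum_right]
      have : ∀ k : Fin n, pairing (u i) ((z k : ℝ) • v k)
          = (z k : ℝ) * (if i = k then 1 else 0) := by
        intro k; rw [pairing_smul_right, hdual]
      rw [Finset.sum_congr rfl fun k _ => this k]
      simp [Finset.sum_ite_eq]
    rw [← this, key]
  set w : Fin n → ℤ := fun i => -z i with hw
  have hwR : ∀ i, ((w i : ℝ)) = (b:ℝ) * ∏ j ∈ Finset.univ.erase i, (a j : ℝ) := by
    intro i; simp [hw]; rw [hcoef]; ring
  have hwpos : ∀ i, 0 < w i := by
    intro i
    have : (0:ℝ) < (w i : ℝ) := by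
      rw [hwR]
      exact mul_pos hbR (Finset.prod_pos fun j _ => haR j)
    exact_mod_cast this
  have hprod : ∀ i : Fin n, (∏ k, (a k : ℝ)) = (a i : ℝ) * ∏ j ∈ Finset.univ.erase i, (a j : ℝ) := by
    intro i
    rw [← Finset.mul_prod_erase Finset.univ _ (Finset.mem_univ i)]
  have hn : (0:ℝ) < (n:ℝ) := by
    exact_mod_cast Nat.pos_of_ne_zero (NeZero.ne n)
  have h0R : (a 0 : ℝ) = (n:ℝ) := by exact_mod_cast h0
  -- d = n * w 0
  have hd : ((n : ℤ) * w 0 : ℝ) = (b:ℝ) * ∏ i, (a i : ℝ) := by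
    push_cast
    rw [hwR, hprod 0, h0R]
    ring
  refine ⟨⟨(n:ℤ) * w 0, by exact_mod_cast hd, mul_pos (by exact_mod_cast Nat.pos_of_ne_zero (NeZero.ne n)) (hwpos 0)⟩, ?_, ?_⟩
  · rw [pairing_smul_left, key 0, hprod 0]
    ring
  -- the inequality
  · rw [pairing_sum_left]
    rw [Finset.sum_congr rfl fun i _ => key i]
    have hsum : (∑ i, -((b:ℝ) * ∏ j ∈ Finset.univ.erase i, (a j : ℝ)))
        = -((∑ i, w i : ℤ) : ℝ) := by
      push_cast
      rw [← Finset.sum_neg_distrib]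
      exact Finset.sum_congr rfl fun i _ => by rw [hwR]
    rw [hsum]
    -- show (∑ w i) < n * w 0 as integers, hence ≤ n*w0 - 1
    have hlt : (∑ i, w i) < (n:ℤ) * w 0 := by
      have hltR : ((∑ i, w i : ℤ) : ℝ) < (((n:ℤ) * w 0 : ℤ) : ℝ) := by
        push_cast
        have hle : ∀ i : Fin n, (w i : ℝ) ≤ (w 0 : ℝ) := by
          intro i
          rw [hwR, hwR]
          have h1 : (a 0 : ℝ) ≤ (a i : ℝ) := by exact_mod_cast hmin i
          have h2 : (a i : ℝ) * ((b:ℝ) * ∏ j ∈ Finset.univ.erase i, (a j : ℝ))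
              = (a 0 : ℝ) * ((b:ℝ) * ∏ j ∈ Finset.univ.erase 0, (a j : ℝ)) := by
            rw [show ∀ x y : ℝ, (x * ((b:ℝ) * y)) = (b:ℝ) * (x * y) from fun x y => by ring,
              ← hprod i, show ((a 0:ℝ)) * ((b:ℝ) * ∏ j ∈ Finset.univ.erase 0, (a j:ℝ))
                = (b:ℝ) * ((a 0:ℝ) * ∏ j ∈ Finset.univ.erase 0, (a j:ℝ)) from by ring,
              ← hprod 0]
          nlinarith [mul_pos hbR (Finset.prod_pos (fun j (_ : j ∈ Finset.univ.erase i) => haR j)),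
            mul_pos hbR (Finset.prod_pos (fun j (_ : j ∈ Finset.univ.erase 0) => haR j)),
            haR i, haR 0]
        obtain ⟨j0, hj0⟩ := hj
        have hstrict : (w j0 : ℝ) < (w 0 : ℝ) := by
          rw [hwR, hwR]
          have h1 : (a 0 : ℝ) < (a j0 : ℝ) := by rw [h0R]; exact_mod_cast hj0
          have h2 : (a j0 : ℝ) * ((b:ℝ) * ∏ j ∈ Finset.univ.erase j0, (a j : ℝ))
              = (a 0 : ℝ) * ((b:ℝ) * ∏ j ∈ Finset.univ.erase 0, (a j : ℝ)) := by
            rw [show ∀ x y : ℝ, (x * ((b:ℝ) * y)) = (b:ℝ) * (x * y) from fun x y => by ring,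
              ← hprod j0, show ((a 0:ℝ)) * ((b:ℝ) * ∏ j ∈ Finset.univ.erase 0, (a j:ℝ))
                = (b:ℝ) * ((a 0:ℝ) * ∏ j ∈ Finset.univ.erase 0, (a j:ℝ)) from by ring,
              ← hprod 0]
          nlinarith [mul_pos hbR (Finset.prod_pos (fun j (_ : j ∈ Finset.univ.erase j0) => haR j)),
            mul_pos hbR (Finset.prod_pos (fun j (_ : j ∈ Finset.univ.erase 0) => haR j)),
            haR j0, haR 0]
        calc (∑ i, (w i : ℝ)) < ∑ _i : Fin n, (w 0 : ℝ) :=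
              Finset.sum_lt_sum (fun i _ => hle i) ⟨j0, Finset.mem_univ j0, hstrict⟩
          _ = (n:ℝ) * (w 0 : ℝ) := by simp [Finset.sum_const, mul_comm]
      exact_mod_cast hltR
    have hle' : (∑ i, w i) ≤ (n:ℤ) * w 0 - 1 := by omega
    have : ((∑ i, w i : ℤ) : ℝ) ≤ (((n:ℤ) * w 0 : ℤ) : ℝ) - 1 := by exact_mod_cast hle'
    push_cast at this
    rw [show ((n:ℝ)) * ((w 0 : ℤ):ℝ) = (b:ℝ) * ∏ i, (a i : ℝ) by exact_mod_cast hd] at this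
    push_cast
    linarith
end
end
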